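/- arXiv:math/0612460 — 2 statements merged into one kernel-verified Lean document; each statement's English description precedes it below -/
import Mathlib

section
/- Let (A, A*) be a tridiagonal pair on V with eigenspace orderings V_0, ..., V_d of A and V*_0, ..., V*_d of A*, with eigenvalues θ_0, ..., θ_d of A, and let τ_i = (λ − θ_0)···(λ − θ_{i−1}). For 0 ≤ i ≤ d define U_i = (V*_0 + V*_1 + ··· + V*_i) ∩ (V_i + V_{i+1} + ··· + V_d). Then τ_i(A) U_0 ⊆ U_i for 0 ≤ i ≤ d. -/
open Polynomial

/-- A tridiagonal pair on `V`, with eigenspace orderings `Ev 0, ..., Ev d` of `A`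
(with eigenvalues `θ 0, ..., θ d`) and `Ew 0, ..., Ew d` of `B = A*`
(with eigenvalues `θ' 0, ..., θ' d`).  For indices `i > d` we set `Ev i = ⊥`,
`Ew i = ⊥`, encoding the conventions `V_{-1} = 0`, `V_{d+1} = 0`
(note `Ev (0 - 1) = Ev 0` by truncated subtraction, which is harmless in the
tridiagonal conditions below since `Ev i` appears in the sum anyway). -/
structure TridiagonalPair (K V : Type*) [Field K] [AddCommGroup V] [Module K V]
    [FiniteDimensional K V] where
  A : Module.End K V
  B : Module.End K V
  d : ℕ
  Ev : ℕ → Submodule K V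
  Ew : ℕ → Submodule K V
  θ : ℕ → K
  θ' : ℕ → K
  hEv_eig : ∀ i ≤ d, Ev i = Module.End.eigenspace A (θ i)
  hEv_ne : ∀ i ≤ d, Ev i ≠ ⊥
  hEv_all : ∀ μ : K, Module.End.eigenspace A μ ≠ ⊥ → ∃ i ≤ d, θ i = μ
  hθ_inj : ∀ i ≤ d, ∀ j ≤ d, θ i = θ j → i = j
  hEv_top : (⨆ i ∈ Finset.range (d + 1), Ev i) = ⊤
  hEv_bot : ∀ i, d < i → Ev i = ⊥
  hEw_eig : ∀ i ≤ d, Ew i = Module.End.eigenspace B (θ' i)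
  hEw_ne : ∀ i ≤ d, Ew i ≠ ⊥
  hEw_all : ∀ μ : K, Module.End.eigenspace B μ ≠ ⊥ → ∃ i ≤ d, θ' i = μ
  hθ'_inj : ∀ i ≤ d, ∀ j ≤ d, θ' i = θ' j → i = j
  hEw_top : (⨆ i ∈ Finset.range (d + 1), Ew i) = ⊤
  hEw_bot : ∀ i, d < i → Ew i = ⊥
  hTriB : ∀ i ≤ d, ∀ v ∈ Ev i, B v ∈ Ev (i - 1) ⊔ Ev i ⊔ Ev (i + 1)
  hTriA : ∀ i ≤ d, ∀ v ∈ Ew i, A v ∈ Ew (i - 1) ⊔ Ew i ⊔ Ew (i + 1)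
  hIrr : ∀ W : Submodule K V, (∀ v ∈ W, A v ∈ W) → (∀ v ∈ W, B v ∈ W) →
    W = ⊥ ∨ W = ⊤

/-- The polynomial `τ_i = (λ - θ_0)(λ - θ_1) ⋯ (λ - θ_{i-1})`. -/
noncomputable def tau {K : Type*} [Field K] (θ : ℕ → K) (i : ℕ) : Polynomial K :=
  ∏ k ∈ Finset.range i, (X - C (θ k))

/-! Since `τ_{i+1}(A) = (A - θ_i) τ_i(A)`, it suffices that `A - θ_i` maps `U_i` into `U_{i+1}`.
On `V*_0 + ⋯ + V*_i` this holds because `A` acts tridiagonally on the `V*_h`, so it raises that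
flag by at most one step; on `V_i + ⋯ + V_d` because `A - θ_i` kills `V_i` and preserves each
`V_h`. -/

section

variable {K V : Type*} [Field K] [AddCommGroup V] [Module K V]

theorem aeval_tau_succ {R : Type*} [Ring R] [Algebra K R] (x : R) (θ : ℕ → K) (i : ℕ) :
    aeval x (tau θ (i + 1)) = (x - algebraMap K R (θ i)) * aeval x (tau θ i) := by
  rw [tau, Finset.prod_range_succ, mul_comm, map_mul, ← tau, map_sub, aeval_X, aeval_C]

theorem iSup_range_le_comap_sub_of_tridiagonal (f : Module.End K V) (W : ℕ → Submodule K V)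
    (hW : ∀ h, W h ≤ (W (h - 1) ⊔ W h ⊔ W (h + 1)).comap f) (c : K) (i : ℕ) :
    ⨆ h ∈ Finset.range (i + 1), W h ≤
      (⨆ h ∈ Finset.range (i + 2), W h).comap (f - algebraMap K _ c) := by
  have hle : ∀ j < i + 2, W j ≤ ⨆ h ∈ Finset.range (i + 2), W h := fun j hj =>
    le_iSup₂_of_le j (Finset.mem_range.mpr hj) le_rfl
  refine iSup₂_le fun h hh v hv => ?_
  have hh : h < i + 1 := Finset.mem_range.mp hh
  have hfv : f v ∈ ⨆ h ∈ Finset.range (i + 2), W h :=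
    sup_le (sup_le (hle _ (by omega)) (hle _ (by omega))) (hle _ (by omega)) (hW h hv)
  rw [Submodule.mem_comap, LinearMap.sub_apply, Module.algebraMap_end_apply]
  exact Submodule.sub_mem _ hfv (Submodule.smul_mem _ c (hle h (by omega) hv))

theorem iSup_Icc_le_comap_sub_of_le_eigenspace (f : Module.End K V) (W : ℕ → Submodule K V)
    (θ : ℕ → K) (i d : ℕ) (hW : ∀ h ∈ Finset.Icc i d, W h ≤ f.eigenspace (θ h)) :
    ⨆ h ∈ Finset.Icc i d, W h ≤
      (⨆ h ∈ Finset.Icc (i + 1) d, W h).comap (f - algebraMap K _ (θ i)) := by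
  refine iSup₂_le fun h hh v hv => ?_
  have hfv : f v = θ h • v := Module.End.mem_eigenspace_iff.mp (hW h hh hv)
  rw [Submodule.mem_comap, LinearMap.sub_apply, Module.algebraMap_end_apply, hfv, ← sub_smul]
  obtain ⟨hih, hhd⟩ := Finset.mem_Icc.mp hh
  rcases hih.eq_or_lt with rfl | hlt
  · simp
  · refine Submodule.smul_mem _ _ ?_
    exact le_iSup₂_of_le (f := fun h _ => W h) h (Finset.mem_Icc.mpr ⟨hlt, hhd⟩) le_rfl hv

end

namespace TridiagonalPair

variable {K V : Type*} [Field K] [AddCommGroup V] [Module K V] [FiniteDimensional K V]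

/-- The split decomposition `U_i`. -/
def split (p : TridiagonalPair K V) (i : ℕ) : Submodule K V :=
  (⨆ h ∈ Finset.range (i + 1), p.Ew h) ⊓ (⨆ h ∈ Finset.Icc i p.d, p.Ev h)

theorem Ew_le_comap_A (p : TridiagonalPair K V) (h : ℕ) :
    p.Ew h ≤ (p.Ew (h - 1) ⊔ p.Ew h ⊔ p.Ew (h + 1)).comap p.A := by
  rcases le_or_gt h p.d with hd | hd
  · exact p.hTriA h hd
  · simp [p.hEw_bot h hd]

theorem split_le_comap_A_sub (p : TridiagonalPair K V) (i : ℕ) :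
    p.split i ≤ (p.split (i + 1)).comap (p.A - algebraMap K _ (p.θ i)) := fun _ hv =>
  ⟨iSup_range_le_comap_sub_of_tridiagonal p.A p.Ew p.Ew_le_comap_A (p.θ i) i hv.1,
    iSup_Icc_le_comap_sub_of_le_eigenspace p.A p.Ev p.θ i p.d
      (fun h hh => (p.hEv_eig h (Finset.mem_Icc.mp hh).2).le) hv.2⟩

theorem aeval_tau_mem_split (p : TridiagonalPair K V) {v : V} (hv : v ∈ p.split 0) (i : ℕ) :
    aeval p.A (tau p.θ i) v ∈ p.split i := by
  induction i with
  | zero => simpa [tau] using hv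
  | succ i ih =>
    rw [aeval_tau_succ, Module.End.mul_apply]
    exact p.split_le_comap_A_sub i ih

end TridiagonalPair

theorem stmt5_general {K V : Type*} [Field K] [AddCommGroup V] [Module K V]
    [FiniteDimensional K V]
    (p : TridiagonalPair K V)
    (U : ℕ → Submodule K V)
    (hU : ∀ i, U i = (⨆ h ∈ Finset.range (i + 1), p.Ew h) ⊓
      (⨆ h ∈ Finset.Icc i p.d, p.Ev h)) :
    ∀ i ≤ p.d, ∀ v ∈ U 0, (aeval p.A (tau p.θ i)) v ∈ U i := by
  obtain rfl : U = p.split := funext hU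
  exact fun i _ v hv => p.aeval_tau_mem_split hv i

/-- With `U_i = (V*_0 + ⋯ + V*_i) ∩ (V_i + ⋯ + V_d)` the split decomposition,
`τ_i(A) U_0 ⊆ U_i` for `0 ≤ i ≤ d`. -/
theorem stmt5 {K V : Type*} [Field K] [AddCommGroup V] [Module K V]
    [FiniteDimensional K V] (hpos : 0 < Module.finrank K V)
    (p : TridiagonalPair K V)
    (U : ℕ → Submodule K V)
    (hU : ∀ i, U i = (⨆ h ∈ Finset.range (i + 1), p.Ew h) ⊓
      (⨆ h ∈ Finset.Icc i p.d, p.Ev h)) :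
    ∀ i ≤ p.d, ∀ v ∈ U 0, (aeval p.A (tau p.θ i)) v ∈ U i :=
  stmt5_general p U hU
end

section
/- Let (A, A*) be a tridiagonal pair on V with eigenspace orderings V_0, ..., V_d of A and V*_0, ..., V*_d of A*, and assume d ≥ 1. Let D denote the subalgebra of End(V) generated by A. Then for X ∈ End(V) the following are equivalent: (i) X ∈ D and X V*_0 ⊆ V*_0 + V*_1; (ii) there exist scalars r, s ∈ K such that X = rA + sI. -/
open Polynomial

/-!
Write `F_i = V*_0 + ⋯ + V*_i`. For a decreasing family `H_0 = V ⊇ H_1 ⊇ ⋯` with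
`(A - σ_i) H_i ⊆ H_{i+1}` and `A* H_{i+1} ⊆ H_i`, the sum `∑ F_i ∩ H_i` is invariant under `A` and `A*`
and contains `V*_0`, so it is `V` by irreducibility. This applies to `H_i = V_i + ⋯ + V_d` and to
`H_i = V_0 + ⋯ + V_{d-i}`.

An element of `D` is `q(A)` with `deg q ≤ d`. If `deg q = n + 1 ≥ 2` and `q(A) V*_0 ⊆ F_1 ⊆ F_n`, then
multiplying by `A^(d-n-1)` and discarding lower-degree terms (as `A F_i ⊆ F_{i+1}`) gives
`τ_d(A) V*_0 ⊆ F_{d-1}`. Since `τ_d(A)` kills `V_0 + ⋯ + V_{d-1}`, the second decomposition gives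
`V_d = τ_d(A) V ⊆ F_{d-1}`, and then the first one gives `V = F_{d-1}`, contradicting `V*_d ≠ 0`.
-/

section tau

variable {K : Type*} [Field K]

lemma tau_monic (θ : ℕ → K) (n : ℕ) : (tau θ n).Monic :=
  monic_prod_of_monic _ _ fun _ _ => monic_X_sub_C _

lemma natDegree_tau (θ : ℕ → K) (n : ℕ) : (tau θ n).natDegree = n := by
  rw [tau, natDegree_prod_of_monic _ _ fun _ _ => monic_X_sub_C _]
  simp

lemma eval_tau (θ : ℕ → K) (n : ℕ) (μ : K) : (tau θ n).eval μ = ∏ k ∈ Finset.range n, (μ - θ k) := by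
  simp [tau, eval_prod]

end tau

namespace TridiagonalPair

variable {K V : Type*} [Field K] [AddCommGroup V] [Module K V] [FiniteDimensional K V]

def swap (p : TridiagonalPair K V) : TridiagonalPair K V where
  A := p.B
  B := p.A
  d := p.d
  Ev := p.Ew
  Ew := p.Ev
  θ := p.θ'
  θ' := p.θ
  hEv_eig := p.hEw_eig
  hEv_ne := p.hEw_ne
  hEv_all := p.hEw_all
  hθ_inj := p.hθ'_inj
  hEv_top := p.hEw_top
  hEv_bot := p.hEw_bot
  hEw_eig := p.hEv_eig
  hEw_ne := p.hEv_ne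
  hEw_all := p.hEv_all
  hθ'_inj := p.hθ_inj
  hEw_top := p.hEv_top
  hEw_bot := p.hEv_bot
  hTriB := p.hTriA
  hTriA := p.hTriB
  hIrr W hA hB := p.hIrr W hB hA

def eigenSum (p : TridiagonalPair K V) (s : Set ℕ) : Submodule K V := ⨆ j ∈ s, p.Ev j

def flag (p : TridiagonalPair K V) (i : ℕ) : Submodule K V := p.swap.eigenSum (Set.Iic i)

variable {p : TridiagonalPair K V}

section eigenSum

variable {s t : Set ℕ} {j k : ℕ}

lemma apply_eq_smul_of_mem_Ev (hj : j ≤ p.d) {v : V} (hv : v ∈ p.Ev j) : p.A v = p.θ j • v :=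
  Module.End.mem_eigenspace_iff.mp (p.hEv_eig j hj ▸ hv)

lemma Ev_le_eigenSum (h : j ≤ p.d → j ∈ s) : p.Ev j ≤ p.eigenSum s := by
  by_cases hj : j ≤ p.d
  · exact le_biSup p.Ev (h hj)
  · simp [p.hEv_bot j (not_le.mp hj)]

lemma eigenSum_mono : Monotone p.eigenSum := fun _ _ h => biSup_mono h

lemma eigenSum_le {T : Submodule K V} (h : ∀ j ∈ s, j ≤ p.d → p.Ev j ≤ T) :
    p.eigenSum s ≤ T :=
  iSup₂_le fun j hj => by
    by_cases hjd : j ≤ p.d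
    · exact h j hj hjd
    · simp [p.hEv_bot j (not_le.mp hjd)]

lemma eigenSum_eq_top (h : ∀ j ≤ p.d, j ∈ s) : p.eigenSum s = ⊤ := by
  rw [eq_top_iff, ← p.hEv_top]
  exact iSup₂_le fun j hj =>
    Ev_le_eigenSum fun _ => h j (Nat.lt_succ_iff.mp (Finset.mem_range.mp hj))

lemma eigenSum_ne_top (hj : j ≤ p.d) (hjs : j ∉ s) : p.eigenSum s ≠ ⊤ := by
  intro htop
  have hle : p.eigenSum s ≤ ⨆ μ, ⨆ _ : μ ≠ p.θ j, p.A.eigenspace μ :=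
    eigenSum_le fun i his hid => by
      rw [p.hEv_eig i hid]
      refine le_iSup₂_of_le (p.θ i) (fun h => ?_) le_rfl
      exact hjs (p.hθ_inj i hid j hj h ▸ his)
  have hdisj := (Module.End.eigenspaces_iSupIndep p.A (p.θ j)).mono_right hle
  rw [htop, ← p.hEv_eig j hj, disjoint_top] at hdisj
  exact p.hEv_ne j hj hdisj

lemma eigenSum_le_comap_sub_smul (h : s \ {k} ⊆ t) :
    p.eigenSum s ≤ (p.eigenSum t).comap (p.A - p.θ k • 1) :=
  eigenSum_le fun j hj hjd v hv => by
    have : (p.A - p.θ k • 1) v = (p.θ j - p.θ k) • v := by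
      simp [apply_eq_smul_of_mem_Ev hjd hv, sub_smul]
    rw [Submodule.mem_comap, this]
    by_cases hjk : j = k
    · simp [hjk]
    · exact Submodule.smul_mem _ _ (Ev_le_eigenSum (fun _ => h ⟨hj, hjk⟩) hv)

lemma eigenSum_le_comap_B (h : ∀ j ∈ s, ∀ k ≤ p.d, j ≤ k + 1 → k ≤ j + 1 → k ∈ t) :
    p.eigenSum s ≤ (p.eigenSum t).comap p.B :=
  eigenSum_le fun j hj hjd v hv => by
    have hk : ∀ k, j ≤ k + 1 → k ≤ j + 1 → p.Ev k ≤ p.eigenSum t :=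
      fun k h₁ h₂ => Ev_le_eigenSum fun hk => h j hj k hk h₁ h₂
    exact sup_le (sup_le (hk _ (by omega) (by omega)) (hk _ (by omega) (by omega)))
      (hk _ (by omega) (by omega)) (p.hTriB j hjd v hv)

end eigenSum

section flag

variable {i n : ℕ}

lemma Ew_le_flag {j : ℕ} (h : j ≤ i) : p.Ew j ≤ p.flag i :=
  Ev_le_eigenSum (p := p.swap) fun _ => h

lemma flag_mono : Monotone p.flag := fun _ _ h => eigenSum_mono (Set.Iic_subset_Iic.mpr h)

lemma flag_zero : p.flag 0 = p.Ew 0 :=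
  le_antisymm (eigenSum_le fun j hj _ => by rw [Nat.le_zero.mp hj]; rfl) (Ew_le_flag le_rfl)

lemma flag_ne_top (h : i < p.d) : p.flag i ≠ ⊤ :=
  eigenSum_ne_top (p := p.swap) le_rfl (not_le.mpr h)

lemma flag_le_comap_A : p.flag i ≤ (p.flag (i + 1)).comap p.A :=
  eigenSum_le_comap_B (p := p.swap) fun j hj k _ _ hk => by
    simp only [Set.mem_Iic] at hj ⊢; omega

lemma flag_le_comap_B_sub_smul : p.flag i ≤ (p.flag (i - 1)).comap (p.B - p.θ' i • 1) :=
  eigenSum_le_comap_sub_smul (p := p.swap) fun j ⟨hj, hji⟩ => by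
    simp only [Set.mem_Iic, Set.mem_singleton_iff] at hj hji ⊢; omega

lemma aeval_mem_flag {q : K[X]} (hq : q.natDegree ≤ n) {v : V} (hv : v ∈ p.flag i) :
    aeval p.A q v ∈ p.flag (i + n) := by
  have hpow : ∀ m, (p.A ^ m) v ∈ p.flag (i + m) := fun m => by
    induction m with
    | zero => simpa using hv
    | succ m ih => rw [pow_succ', Module.End.mul_apply]; exact flag_le_comap_A ih
  rw [aeval_eq_sum_range' (Nat.lt_succ_of_le hq), LinearMap.coe_sum, Finset.sum_apply]
  exact Submodule.sum_mem _ fun m hm => Submodule.smul_mem _ _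
    (flag_mono (by rw [Finset.mem_range] at hm; omega) (hpow m))

end flag

lemma iSup_flag_inf_eq_top {H : ℕ → Submodule K V} {σ : ℕ → K} (hH0 : H 0 = ⊤) (hH : Antitone H)
    (hA : ∀ i, H i ≤ (H (i + 1)).comap (p.A - σ i • 1)) (hB : ∀ i, H (i + 1) ≤ (H i).comap p.B) :
    ⨆ i, p.flag i ⊓ H i = ⊤ := by
  set U := ⨆ i, p.flag i ⊓ H i
  have hU : ∀ i, p.flag i ⊓ H i ≤ U := le_iSup (fun i => p.flag i ⊓ H i)
  have shift : ∀ (f : Module.End K V) (c : K) (i : ℕ) {x : V}, x ∈ p.flag i ⊓ H i →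
      (f - c • 1) x ∈ U → f x ∈ U := fun f c i x hx h => by
    simpa using add_mem h (U.smul_mem c (hU i hx))
  have hAU : U ≤ U.comap p.A := iSup_le fun i x hx =>
    shift _ (σ i) i hx (hU (i + 1) ⟨sub_mem (flag_le_comap_A hx.1)
      (Submodule.smul_mem _ _ (flag_mono i.le_succ hx.1)), hA i hx.2⟩)
  have hBU : U ≤ U.comap p.B := iSup_le fun i x hx => by
    have hBx : p.B x ∈ H (i - 1) := by
      cases i with
      | zero => simp [hH0]
      | succ k => exact hB k hx.2
    refine shift _ (p.θ' i) i hx (hU (i - 1) ⟨flag_le_comap_B_sub_smul hx.1, ?_⟩)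
    simpa using sub_mem hBx (Submodule.smul_mem _ (p.θ' i) (hH (Nat.sub_le i 1) hx.2))
  refine (p.hIrr U (fun v hv => hAU hv) (fun v hv => hBU hv)).resolve_left fun hbot => ?_
  have : p.Ew 0 ≤ U := by simpa [flag_zero, hH0] using hU 0
  exact p.hEw_ne 0 (Nat.zero_le _) (eq_bot_iff.mpr (hbot ▸ this))

section aeval_tau

lemma aeval_tau_apply_of_mem_Ev {j : ℕ} (hj : j ≤ p.d) (n : ℕ) {v : V} (hv : v ∈ p.Ev j) :
    aeval p.A (tau p.θ n) v = (∏ k ∈ Finset.range n, (p.θ j - p.θ k)) • v := by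
  rw [Module.End.aeval_apply_of_mem_apply_eq_smul (apply_eq_smul_of_mem_Ev hj hv), eval_tau]

lemma aeval_tau_apply_eq_zero {j n : ℕ} (hj : j ≤ p.d) (hjn : j < n) {v : V} (hv : v ∈ p.Ev j) :
    aeval p.A (tau p.θ n) v = 0 := by
  rw [aeval_tau_apply_of_mem_Ev hj n hv,
    Finset.prod_eq_zero (Finset.mem_range.mpr hjn) (sub_self _), zero_smul]

lemma aeval_tau_eq_zero : aeval p.A (tau p.θ (p.d + 1)) = 0 := by
  have : p.eigenSum Set.univ ≤ LinearMap.ker (aeval p.A (tau p.θ (p.d + 1))) :=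
    eigenSum_le fun j _ hj v hv => aeval_tau_apply_eq_zero hj (Nat.lt_succ_of_le hj) hv
  rw [eigenSum_eq_top (s := Set.univ) fun _ _ => trivial, top_le_iff, LinearMap.ker_eq_top] at this
  exact this

lemma Ev_d_le_of_aeval_tau_mem {T : Submodule K V} (h : ∀ v, aeval p.A (tau p.θ p.d) v ∈ T) :
    p.Ev p.d ≤ T := fun v hv => by
  have hc : (∏ k ∈ Finset.range p.d, (p.θ p.d - p.θ k)) ≠ 0 :=
    Finset.prod_ne_zero_iff.mpr fun k hk => sub_ne_zero.mpr fun heq =>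
      (Finset.mem_range.mp hk).ne' (p.hθ_inj _ le_rfl k (Finset.mem_range.mp hk).le heq)
  refine (Submodule.smul_mem_iff T hc).mp ?_
  rw [← aeval_tau_apply_of_mem_Ev le_rfl _ hv]
  exact h v

end aeval_tau

lemma exists_natDegree_le_aeval_eq {f : Module.End K V} (hf : f ∈ Algebra.adjoin K {p.A}) :
    ∃ q : K[X], q.natDegree ≤ p.d ∧ aeval p.A q = f := by
  rw [Algebra.adjoin_singleton_eq_range_aeval] at hf
  obtain ⟨g, rfl⟩ := hf
  refine ⟨g %ₘ tau p.θ (p.d + 1), ?_, aeval_modByMonic_eq_self_of_root aeval_tau_eq_zero⟩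
  have := natDegree_modByMonic_lt g (tau_monic p.θ (p.d + 1))
    fun h => by simpa [h] using natDegree_tau p.θ (p.d + 1)
  rw [natDegree_tau] at this
  omega

lemma aeval_tau_mem_flag_of_aeval_mem_flag {q : K[X]} {m : ℕ} (hq : q.natDegree = m + 1) {v : V}
    (hv : v ∈ p.Ew 0) (hqv : aeval p.A q v ∈ p.flag m) :
    aeval p.A (tau p.θ (m + 1)) v ∈ p.flag m := by
  set τ := tau p.θ (m + 1)
  have hτ : τ.Monic := tau_monic p.θ (m + 1)
  have hτ1 : τ ≠ 1 := ne_of_apply_ne natDegree (by rw [natDegree_tau, natDegree_one]; omega)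
  set c := (q /ₘ τ).coeff 0
  have hc : q /ₘ τ = C c := eq_C_of_natDegree_eq_zero <| by
    rw [natDegree_divByMonic _ hτ, hq, natDegree_tau, Nat.sub_self]
  have hc0 : c ≠ 0 := fun h => by
    have hlt := (divByMonic_eq_zero_iff hτ).mp (by rw [hc, h, C_0])
    have := natDegree_lt_natDegree (fun h0 => by simp [h0] at hq) hlt
    rw [natDegree_tau] at this
    omega
  have hr : aeval p.A (q %ₘ τ) v ∈ p.flag m := by
    have hdeg := natDegree_modByMonic_lt q hτ hτ1
    rw [natDegree_tau] at hdeg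
    rw [← flag_zero] at hv
    simpa using aeval_mem_flag (Nat.lt_succ_iff.mp hdeg) hv
  have hdecomp : aeval p.A q v = aeval p.A (q %ₘ τ) v + c • aeval p.A τ v := by
    conv_lhs => rw [← modByMonic_add_div q τ, hc]
    simp [Algebra.algebraMap_eq_smul_one]
  refine (Submodule.smul_mem_iff _ hc0).mp ?_
  simpa [hdecomp] using sub_mem hqv hr

lemma iSup_flag_inf_eigenSum_Ici_eq_top : ⨆ i, p.flag i ⊓ p.eigenSum (Set.Ici i) = ⊤ :=
  iSup_flag_inf_eq_top (σ := p.θ) (eigenSum_eq_top fun j _ => Set.mem_Ici.mpr j.zero_le)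
    (fun _ _ h => eigenSum_mono (Set.Ici_subset_Ici.mpr h))
    (fun i => eigenSum_le_comap_sub_smul fun j ⟨hj, hji⟩ => by
      simp only [Set.mem_Ici, Set.mem_singleton_iff] at hj hji ⊢; omega)
    (fun i => eigenSum_le_comap_B fun j hj k _ h₁ _ => by
      simp only [Set.mem_Ici] at hj ⊢; omega)

lemma iSup_flag_inf_eigenSum_add_le_eq_top : ⨆ i, p.flag i ⊓ p.eigenSum {j | j + i ≤ p.d} = ⊤ :=
  iSup_flag_inf_eq_top (σ := fun i => p.θ (p.d - i)) (eigenSum_eq_top fun j hj => by simpa)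
    (fun _ _ h => eigenSum_mono fun j hj => by simp only [Set.mem_ofPred_eq] at hj ⊢; omega)
    (fun i => eigenSum_le_comap_sub_smul fun j ⟨hj, hji⟩ => by
      simp only [Set.mem_ofPred_eq, Set.mem_singleton_iff] at hj hji ⊢; omega)
    (fun i => eigenSum_le_comap_B fun j hj k _ _ h₂ => by
      simp only [Set.mem_ofPred_eq] at hj ⊢; omega)

lemma flag_eq_top_of_Ev_d_le (h : p.Ev p.d ≤ p.flag (p.d - 1)) : p.flag (p.d - 1) = ⊤ := by
  rw [eq_top_iff, ← iSup_flag_inf_eigenSum_Ici_eq_top]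
  refine iSup_le fun i => ?_
  by_cases hi : i ≤ p.d - 1
  · exact inf_le_left.trans (flag_mono hi)
  · refine inf_le_right.trans (eigenSum_le fun j hj hjd => ?_)
    rw [show j = p.d by simp only [Set.mem_Ici] at hj; omega]
    exact h

lemma aeval_tau_mem_of_forall_mem_Ew_zero {T : Submodule K V}
    (h : ∀ v ∈ p.Ew 0, aeval p.A (tau p.θ p.d) v ∈ T) (v : V) : aeval p.A (tau p.θ p.d) v ∈ T := by
  suffices ⊤ ≤ T.comap (aeval p.A (tau p.θ p.d)) from this Submodule.mem_top
  rw [← iSup_flag_inf_eigenSum_add_le_eq_top]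
  refine iSup_le fun i => ?_
  rcases i with _ | i
  · rw [flag_zero]
    exact inf_le_left.trans h
  · refine inf_le_right.trans (eigenSum_le fun j hj hjd w hw => ?_)
    rw [Submodule.mem_comap, aeval_tau_apply_eq_zero hjd (by simp only [Set.mem_ofPred_eq] at hj; omega) hw]
    exact T.zero_mem

lemma exists_aeval_not_mem_flag {q : K[X]} {n : ℕ} (hq : q.natDegree = n + 1) (hn : n < p.d) :
    ∃ v ∈ p.Ew 0, aeval p.A q v ∉ p.flag n := by
  by_contra! H
  have hd : p.d - 1 + 1 = p.d := by omega
  have hq0 : q ≠ 0 := fun h => by simp [h] at hq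
  set k := p.d - (n + 1)
  have hdeg : (X ^ k * q).natDegree = p.d - 1 + 1 := by
    rw [natDegree_X_pow_mul _ hq0]
    omega
  have hXq : ∀ v ∈ p.Ew 0, aeval p.A (X ^ k * q) v ∈ p.flag (p.d - 1) := fun v hv => by
    have := aeval_mem_flag (natDegree_X_pow_le k) (H v hv)
    rwa [show n + k = p.d - 1 by omega, ← Module.End.mul_apply, ← map_mul] at this
  have hτ : ∀ v ∈ p.Ew 0, aeval p.A (tau p.θ p.d) v ∈ p.flag (p.d - 1) := fun v hv => by
    simpa [hd] using aeval_tau_mem_flag_of_aeval_mem_flag hdeg hv (hXq v hv)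
  exact flag_ne_top (by omega)
    (flag_eq_top_of_Ev_d_le (Ev_d_le_of_aeval_tau_mem (aeval_tau_mem_of_forall_mem_Ew_zero hτ)))

end TridiagonalPair

open TridiagonalPair

theorem stmt6_general {K V : Type*} [Field K] [AddCommGroup V] [Module K V]
    [FiniteDimensional K V]
    (p : TridiagonalPair K V)
    (X : Module.End K V) :
    (X ∈ Algebra.adjoin K {p.A} ∧ ∀ v ∈ p.Ew 0, X v ∈ p.Ew 0 ⊔ p.Ew 1) ↔
    (∃ r s : K, X = r • p.A + s • (1 : Module.End K V)) := by
  constructor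
  · rintro ⟨hXD, hX⟩
    obtain ⟨q, hqd, rfl⟩ := exists_natDegree_le_aeval_eq hXD
    rcases le_or_gt q.natDegree 1 with hq1 | hq1
    · refine ⟨q.coeff 1, q.coeff 0, ?_⟩
      conv_lhs => rw [eq_X_add_C_of_natDegree_le_one hq1]
      simp [Algebra.algebraMap_eq_smul_one]
    · obtain ⟨v, hv, hqv⟩ := exists_aeval_not_mem_flag (Nat.succ_pred_eq_of_pos (by omega)).symm
        (by omega : q.natDegree - 1 < p.d)
      have hX1 : p.Ew 0 ⊔ p.Ew 1 ≤ p.flag 1 := sup_le (Ew_le_flag zero_le_one) (Ew_le_flag le_rfl)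
      exact (hqv (flag_mono (by omega : 1 ≤ q.natDegree - 1) (hX1 (hX v hv)))).elim
  · rintro ⟨r, s, rfl⟩
    refine ⟨add_mem (Subalgebra.smul_mem _ (Algebra.self_mem_adjoin_singleton K p.A) r)
      (Subalgebra.smul_mem _ (Subalgebra.one_mem _) s), fun v hv => ?_⟩
    have hAv : p.A v ∈ p.Ew 0 ⊔ p.Ew 1 := by simpa using p.hTriA 0 (Nat.zero_le _) v hv
    simpa using add_mem (Submodule.smul_mem _ r hAv) (Submodule.smul_mem _ s (Submodule.mem_sup_left hv))

/-- Assume `d ≥ 1`.  For `X ∈ End(V)` the following are equivalent: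
(i) `X ∈ D` and `X V*_0 ⊆ V*_0 + V*_1`;
(ii) there exist `r, s ∈ K` with `X = r A + s I`. -/
theorem stmt6 {K V : Type*} [Field K] [AddCommGroup V] [Module K V]
    [FiniteDimensional K V] (hpos : 0 < Module.finrank K V)
    (p : TridiagonalPair K V)
    (hd : 1 ≤ p.d) (X : Module.End K V) :
    (X ∈ Algebra.adjoin K {p.A} ∧ ∀ v ∈ p.Ew 0, X v ∈ p.Ew 0 ⊔ p.Ew 1) ↔
    (∃ r s : K, X = r • p.A + s • (1 : Module.End K V)) :=
  stmt6_general p X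
end
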